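/- arXiv:1612.01814 — 9 statements merged into one kernel-verified Lean document; each statement's English description precedes it below -/
import Mathlib

section
/- Suppose the velocities satisfy the rolling constraints ẋ = (r/2) cos θ (φ̇₁+φ̇₂), ẏ = (r/2) sin θ (φ̇₁+φ̇₂), θ̇ = (r/d)(φ̇₂−φ̇₁). Then the WIP Lagrangian L evaluated at these velocities equals the constrained Lagrangian L_c(α, α̇, φ̇₁, φ̇₂) = ½ a₁(α)(φ̇₁² + φ̇₂²) + a₃(α) φ̇₁ φ̇₂ + ½ (m_b b² + I_Byy) α̇² + (r/2) m_b b cos α · α̇ (φ̇₁ + φ̇₂) − m_b b g cos α, where a₁(α) = ¼(m_b + 2m_W) r² + (r²/d²) I_θ(α) + I_Wyy and a₃(α) = ¼(m_b + 2m_W) r² − (r²/d²) I_θ(α). -/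
open Real

/-- The α-dependent yaw inertia I_θ(α) of the WIP. -/
noncomputable def Itheta (m_b m_W b d I_Wzz I_Bxx I_Bz : ℝ) (α : ℝ) : ℝ :=
  2 * I_Wzz + I_Bz * (cos α) ^ 2 + 2 * m_W * d ^ 2 + (I_Bxx + m_b * b ^ 2) * (sin α) ^ 2

/-- The WIP Lagrangian in the variables q = (x, y, θ, α, φ₁, φ₂); it does not
depend on x, y, φ₁, φ₂ themselves, only on θ, α and the velocities. -/
noncomputable def Lwip (m_b m_W b g d I_Wyy I_Wzz I_Bxx I_Byy I_Bz : ℝ)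
    (θ α xdot ydot θdot αdot φ1dot φ2dot : ℝ) : ℝ :=
  1 / 2 * (m_b + 2 * m_W) * (xdot ^ 2 + ydot ^ 2)
    + 1 / 2 * Itheta m_b m_W b d I_Wzz I_Bxx I_Bz α * θdot ^ 2
    + 1 / 2 * (m_b * b ^ 2 + I_Byy) * αdot ^ 2
    + 1 / 2 * I_Wyy * (φ1dot ^ 2 + φ2dot ^ 2)
    + m_b * b * sin α * θdot * (-sin θ * xdot + cos θ * ydot)
    + m_b * b * cos α * αdot * (cos θ * xdot + sin θ * ydot)
    - m_b * b * g * cos α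

/-- On the rolling constraint distribution, the WIP Lagrangian equals
the constrained Lagrangian L_c. -/
theorem wip_constrained_lagrangian
    (m_b m_W b r d g I_Wyy I_Wzz I_Bxx I_Byy I_Bz : ℝ)
    (hmb : 0 < m_b) (hmW : 0 < m_W) (hb : 0 < b) (hr : 0 < r) (hd : 0 < d)
    (hg : 0 < g) (hIWyy : 0 < I_Wyy) (hIWzz : 0 < I_Wzz) (hIBxx : 0 < I_Bxx)
    (hIByy : 0 < I_Byy) (hIBz : 0 < I_Bz)
    (θ α xdot ydot θdot αdot φ1dot φ2dot : ℝ)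
    (hx : xdot = r / 2 * cos θ * (φ1dot + φ2dot))
    (hy : ydot = r / 2 * sin θ * (φ1dot + φ2dot))
    (hθ : θdot = r / d * (φ2dot - φ1dot)) :
    Lwip m_b m_W b g d I_Wyy I_Wzz I_Bxx I_Byy I_Bz θ α xdot ydot θdot αdot φ1dot φ2dot
      = 1 / 2 * (1 / 4 * (m_b + 2 * m_W) * r ^ 2
            + r ^ 2 / d ^ 2 * Itheta m_b m_W b d I_Wzz I_Bxx I_Bz α + I_Wyy)
          * (φ1dot ^ 2 + φ2dot ^ 2)
        + (1 / 4 * (m_b + 2 * m_W) * r ^ 2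
            - r ^ 2 / d ^ 2 * Itheta m_b m_W b d I_Wzz I_Bxx I_Bz α) * φ1dot * φ2dot
        + 1 / 2 * (m_b * b ^ 2 + I_Byy) * αdot ^ 2
        + r / 2 * m_b * b * cos α * αdot * (φ1dot + φ2dot)
        - m_b * b * g * cos α := by
  subst hx hy hθ
  unfold Lwip Itheta
  linear_combination (1/8*(m_b+2*m_W)*r^2*(φ1dot+φ2dot)^2 + m_b*b*cos α*αdot*(r/2)*(φ1dot+φ2dot)) * (sin_sq_add_cos_sq θ)
end

section
/- The WIP Lagrangian L is invariant under the SE(2) action: for all real θ̄, x̄, ȳ and all (x, y, θ, α, φ₁, φ₂, ẋ, ẏ, θ̇, α̇, φ̇₁, φ̇₂), one has L(θ + θ̄, α, ẋ cos θ̄ − ẏ sin θ̄, ẋ sin θ̄ + ẏ cos θ̄, θ̇, α̇, φ̇₁, φ̇₂) = L(θ, α, ẋ, ẏ, θ̇, α̇, φ̇₁, φ̇₂) (L does not depend on x, y, so translation by (x̄, ȳ) acts trivially on L). -/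
open Real

/-- The WIP Lagrangian is invariant under the tangent-lifted SE(2)
action (translations x̄, ȳ act trivially since L does not depend on x, y). -/
theorem wip_lagrangian_SE2_invariant
    (m_b m_W b r d g I_Wyy I_Wzz I_Bxx I_Byy I_Bz : ℝ)
    (hmb : 0 < m_b) (hmW : 0 < m_W) (hb : 0 < b) (hr : 0 < r) (hd : 0 < d)
    (hg : 0 < g) (hIWyy : 0 < I_Wyy) (hIWzz : 0 < I_Wzz) (hIBxx : 0 < I_Bxx)
    (hIByy : 0 < I_Byy) (hIBz : 0 < I_Bz) :
    ∀ θbar xbar ybar θ α xdot ydot θdot αdot φ1dot φ2dot : ℝ,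
      Lwip m_b m_W b g d I_Wyy I_Wzz I_Bxx I_Byy I_Bz
        (θ + θbar) α (xdot * cos θbar - ydot * sin θbar)
        (xdot * sin θbar + ydot * cos θbar) θdot αdot φ1dot φ2dot
      = Lwip m_b m_W b g d I_Wyy I_Wzz I_Bxx I_Byy I_Bz
          θ α xdot ydot θdot αdot φ1dot φ2dot := by
  intro θbar xbar ybar θ α xdot ydot θdot αdot φ1dot φ2dot
  simp only [Lwip, cos_add, sin_add]
  have h : cos θbar ^ 2 = 1 - sin θbar ^ 2 := cos_sq' θbar
  ring_nf
  rw [h]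
  ring
end

section
/- For every θ ∈ ℝ, the subspace of ℝ⁶ (coordinates ordered as (ẋ, ẏ, θ̇, α̇, φ̇₁, φ̇₂)) spanned by Y₁ = (cos θ, sin θ, 0, 0, 1/r, 1/r), Y₂ = (0,0,0,1,0,0), Y₃ = (0, 0, 1, 0, −d/(2r), d/(2r)) intersects the subspace spanned by the coordinate vectors e₁, e₂, e₃ (the ẋ, ẏ, θ̇ directions) only in the zero vector. Hence the WIP with SE(2) symmetry is in the principal kinematic case: 𝒟_q ∩ T_q Orb(q) = {0}. -/
/-!
The orbit directions `e₁, e₂, e₃` are killed by the projection onto the shape velocities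
`(α̇, φ̇₁, φ̇₂)`, whereas this projection sends `Y₁, Y₂, Y₃` to the rows of a `3 × 3` matrix of
determinant `-d / r²`. So the projection is injective on `𝒟_q`, and `𝒟_q` meets its kernel,
hence the orbit directions, only in `0`.
-/

open Real Submodule

noncomputable def wipConstraintFrame (r d θ : ℝ) : Fin 3 → Fin 6 → ℝ :=
  ![![cos θ, sin θ, 0, 0, 1 / r, 1 / r], ![0, 0, 0, 1, 0, 0],
    ![0, 0, 1, 0, -d / (2 * r), d / (2 * r)]]

def shapeVelocity : (Fin 6 → ℝ) →ₗ[ℝ] Fin 3 → ℝ := LinearMap.funLeft ℝ ℝ ![3, 4, 5]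

theorem range_wipConstraintFrame (r d θ : ℝ) : Set.range (wipConstraintFrame r d θ) =
    {![cos θ, sin θ, 0, 0, 1 / r, 1 / r], ![0, 0, 0, 1, 0, 0],
      ![0, 0, 1, 0, -d / (2 * r), d / (2 * r)]} := by
  rw [wipConstraintFrame, Matrix.range_cons, Matrix.range_cons_cons_empty, Set.singleton_union]

theorem span_orbitDirections_le_ker_shapeVelocity :
    span ℝ ({![1, 0, 0, 0, 0, 0], ![0, 1, 0, 0, 0, 0], ![0, 0, 1, 0, 0, 0]} : Set (Fin 6 → ℝ))
      ≤ LinearMap.ker shapeVelocity := by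
  rw [span_le]
  rintro v (rfl | rfl | rfl) <;> ext i <;> fin_cases i <;> rfl

theorem det_shapeVelocity_wipConstraintFrame (r d θ : ℝ) :
    (Matrix.of fun i => shapeVelocity (wipConstraintFrame r d θ i)).det = -(d / r ^ 2) := by
  rw [Matrix.det_fin_three]
  simp only [shapeVelocity, LinearMap.funLeft, wipConstraintFrame, LinearMap.coe_mk,
    AddHom.coe_mk, Matrix.of_apply, Function.comp_apply, Matrix.cons_val_zero,
    Matrix.cons_val_one, Matrix.cons_val, one_div]
  ring

theorem linearIndependent_shapeVelocity_wipConstraintFrame {r d : ℝ} (hr : r ≠ 0) (hd : d ≠ 0)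
    (θ : ℝ) : LinearIndependent ℝ (shapeVelocity ∘ wipConstraintFrame r d θ) :=
  Matrix.linearIndependent_rows_of_det_ne_zero
    (A := .of fun i => shapeVelocity (wipConstraintFrame r d θ i)) <| by
      rw [det_shapeVelocity_wipConstraintFrame]
      simp [hr, hd]

/-- Principal kinematic case for the WIP with SE(2) symmetry:
the constraint distribution 𝒟_q = span{Y₁, Y₂, Y₃} intersects the tangent space
to the SE(2) orbit span{e₁, e₂, e₃} only in the zero vector. -/
theorem wip_principal_kinematic_case (r d θ : ℝ) (hr : 0 < r) (hd : 0 < d) :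
    Submodule.span ℝ
        ({![cos θ, sin θ, 0, 0, 1 / r, 1 / r],
          ![0, 0, 0, 1, 0, 0],
          ![0, 0, 1, 0, -d / (2 * r), d / (2 * r)]} : Set (Fin 6 → ℝ))
      ⊓ Submodule.span ℝ
        ({![1, 0, 0, 0, 0, 0],
          ![0, 1, 0, 0, 0, 0],
          ![0, 0, 1, 0, 0, 0]} : Set (Fin 6 → ℝ))
      = ⊥ := by
  rw [← range_wipConstraintFrame, ← disjoint_iff]
  have hY := linearIndependent_shapeVelocity_wipConstraintFrame hr.ne' hd.ne' θ
  exact (range_ker_disjoint hY).mono_right span_orbitDirections_le_ker_shapeVelocity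
end

section
/- The WIP Lagrangian L in the variables q = (x, y, θ, α, φ) is invariant under the SE(2) × S¹ action: for all real x̄, ȳ, θ̄, φ̄ and all (x, y, θ, α, φ) and velocities (ẋ, ẏ, θ̇, α̇, φ̇), one has L(θ + θ̄, α, ẋ cos θ̄ − ẏ sin θ̄, ẋ sin θ̄ + ẏ cos θ̄, θ̇, α̇, φ̇) = L(θ, α, ẋ, ẏ, θ̇, α̇, φ̇) (L does not depend on x, y, φ, so translations in x, y, φ act trivially on L). -/
open Real

/-- The WIP Lagrangian in the variables q = (x, y, θ, α, φ), with
f(α) = I_θ(α) + (d²/(2r²)) I_Wyy; it does not depend on x, y, φ themselves. -/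
noncomputable def Lwip5 (m_b m_W b g r d I_Wyy I_Wzz I_Bxx I_Byy I_Bz : ℝ)
    (θ α xdot ydot θdot αdot φdot : ℝ) : ℝ :=
  1 / 2 * (m_b + 2 * m_W) * (xdot ^ 2 + ydot ^ 2)
    + 1 / 2 * (Itheta m_b m_W b d I_Wzz I_Bxx I_Bz α + d ^ 2 / (2 * r ^ 2) * I_Wyy)
        * θdot ^ 2
    + 1 / 2 * (m_b * b ^ 2 + I_Byy) * αdot ^ 2
    + I_Wyy * φdot ^ 2
    + m_b * b * sin α * θdot * (-sin θ * xdot + cos θ * ydot)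
    + m_b * b * cos α * αdot * (cos θ * xdot + sin θ * ydot)
    - m_b * b * g * cos α

/-- The WIP Lagrangian in variables (x, y, θ, α, φ) is invariant
under the tangent-lifted SE(2) × S¹ action (translations in x, y, φ act
trivially since L does not depend on x, y, φ). -/
theorem wip_lagrangian_SE2xS1_invariant
    (m_b m_W b r d g I_Wyy I_Wzz I_Bxx I_Byy I_Bz : ℝ)
    (hmb : 0 < m_b) (hmW : 0 < m_W) (hb : 0 < b) (hr : 0 < r) (hd : 0 < d)
    (hg : 0 < g) (hIWyy : 0 < I_Wyy) (hIWzz : 0 < I_Wzz) (hIBxx : 0 < I_Bxx)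
    (hIByy : 0 < I_Byy) (hIBz : 0 < I_Bz) :
    ∀ xbar ybar θbar φbar θ α xdot ydot θdot αdot φdot : ℝ,
      Lwip5 m_b m_W b g r d I_Wyy I_Wzz I_Bxx I_Byy I_Bz
        (θ + θbar) α (xdot * cos θbar - ydot * sin θbar)
        (xdot * sin θbar + ydot * cos θbar) θdot αdot φdot
      = Lwip5 m_b m_W b g r d I_Wyy I_Wzz I_Bxx I_Byy I_Bz
          θ α xdot ydot θdot αdot φdot := by
  intro xbar ybar θbar φbar θ α xdot ydot θdot αdot φdot
  simp only [Lwip5, cos_add, sin_add]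
  linear_combination ((m_b / 2 + m_W) * (xdot ^ 2 + ydot ^ 2)
    + m_b * b * sin α * θdot * (-sin θ * xdot + cos θ * ydot)
    + m_b * b * cos α * αdot * (cos θ * xdot + sin θ * ydot)) * sin_sq_add_cos_sq θbar
end

section
/- Suppose the velocities satisfy the rolling constraints ẋ = r cos θ φ̇ and ẏ = r sin θ φ̇. Then the Euclidean inner product in ℝ⁵ of the velocity-gradient ∂L/∂q̇ of the WIP Lagrangian with the vector (r cos θ, r sin θ, 0, 0, 1) equals p₁ = [(m_b + 2m_W) r² + 2 I_Wyy] φ̇ + r m_b b cos α · α̇ = h φ̇ + m_b b r cos α · α̇. -/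
open Real

/-- The WIP Lagrangian in variables q = (x, y, θ, α, φ), viewed as a function of
the velocity vector v = (ẋ, ẏ, θ̇, α̇, φ̇) ∈ ℝ⁵ for fixed (θ, α), with
f(α) = I_θ(α) + (d²/(2r²)) I_Wyy. -/
noncomputable def LwipVel (m_b m_W b g r d I_Wyy I_Wzz I_Bxx I_Byy I_Bz θ α : ℝ)
    (v : Fin 5 → ℝ) : ℝ :=
  1 / 2 * (m_b + 2 * m_W) * ((v 0) ^ 2 + (v 1) ^ 2)
    + 1 / 2 * (Itheta m_b m_W b d I_Wzz I_Bxx I_Bz α + d ^ 2 / (2 * r ^ 2) * I_Wyy)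
        * (v 2) ^ 2
    + 1 / 2 * (m_b * b ^ 2 + I_Byy) * (v 3) ^ 2
    + I_Wyy * (v 4) ^ 2
    + m_b * b * sin α * (v 2) * (-sin θ * v 0 + cos θ * v 1)
    + m_b * b * cos α * (v 3) * (cos θ * v 0 + sin θ * v 1)
    - m_b * b * g * cos α

/-- On the constraint distribution, pairing the velocity-gradient
of the WIP Lagrangian with the generator (r cos θ, r sin θ, 0, 0, 1) yields the
nonholonomic momentum p₁ = h φ̇ + m_b b r cos α · α̇. -/
theorem wip_nonholonomic_momentum_p1
    (m_b m_W b r d g I_Wyy I_Wzz I_Bxx I_Byy I_Bz : ℝ)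
    (hmb : 0 < m_b) (hmW : 0 < m_W) (hb : 0 < b) (hr : 0 < r) (hd : 0 < d)
    (hg : 0 < g) (hIWyy : 0 < I_Wyy) (hIWzz : 0 < I_Wzz) (hIBxx : 0 < I_Bxx)
    (hIByy : 0 < I_Byy) (hIBz : 0 < I_Bz)
    (θ α : ℝ) (v : Fin 5 → ℝ)
    (hvx : v 0 = r * cos θ * v 4) (hvy : v 1 = r * sin θ * v 4) :
    fderiv ℝ (LwipVel m_b m_W b g r d I_Wyy I_Wzz I_Bxx I_Byy I_Bz θ α) v
        ![r * cos θ, r * sin θ, 0, 0, 1]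
      = ((m_b + 2 * m_W) * r ^ 2 + 2 * I_Wyy) * v 4 + r * m_b * b * cos α * v 3 := by
  set w : Fin 5 → ℝ := ![r * cos θ, r * sin θ, 0, 0, 1] with hwdef
  have hdiff : DifferentiableAt ℝ (LwipVel m_b m_W b g r d I_Wyy I_Wzz I_Bxx I_Byy I_Bz θ α) v := by
    unfold LwipVel
    fun_prop
  have hcurve : HasDerivAt (fun t : ℝ => v + t • w) w 0 := by
    simpa using ((hasDerivAt_id (0:ℝ)).smul_const w).const_add v
  have hdiff' : HasFDerivAt (LwipVel m_b m_W b g r d I_Wyy I_Wzz I_Bxx I_Byy I_Bz θ α)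
      (fderiv ℝ (LwipVel m_b m_W b g r d I_Wyy I_Wzz I_Bxx I_Byy I_Bz θ α) v) (v + (0:ℝ) • w) := by
    simpa using hdiff.hasFDerivAt
  have hcomp := hdiff'.comp_hasDerivAt 0 hcurve
  have h0 : HasDerivAt (fun t : ℝ => (v + t • w) 0) (r * cos θ) 0 := by
    simpa [w] using ((hasDerivAt_id (0:ℝ)).mul_const (r * cos θ)).const_add (v 0)
  have h1 : HasDerivAt (fun t : ℝ => (v + t • w) 1) (r * sin θ) 0 := by
    simpa [w] using ((hasDerivAt_id (0:ℝ)).mul_const (r * sin θ)).const_add (v 1)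
  have h2 : HasDerivAt (fun t : ℝ => (v + t • w) 2) 0 0 := by
    simpa [w] using ((hasDerivAt_id (0:ℝ)).mul_const (0:ℝ)).const_add (v 2)
  have h3 : HasDerivAt (fun t : ℝ => (v + t • w) 3) 0 0 := by
    simpa [w] using ((hasDerivAt_id (0:ℝ)).mul_const (0:ℝ)).const_add (v 3)
  have h4 : HasDerivAt (fun t : ℝ => (v + t • w) 4) 1 0 := by
    simpa [w] using ((hasDerivAt_id (0:ℝ)).mul_const (1:ℝ)).const_add (v 4)
  have T1 := ((h0.pow 2).add (h1.pow 2)).const_mul (1 / 2 * (m_b + 2 * m_W))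
  have T2 := (h2.pow 2).const_mul
      (1 / 2 * (Itheta m_b m_W b d I_Wzz I_Bxx I_Bz α + d ^ 2 / (2 * r ^ 2) * I_Wyy))
  have T3 := (h3.pow 2).const_mul (1 / 2 * (m_b * b ^ 2 + I_Byy))
  have T4 := (h4.pow 2).const_mul I_Wyy
  have T5 := (h2.const_mul (m_b * b * sin α)).mul
      ((h0.const_mul (-sin θ)).add (h1.const_mul (cos θ)))
  have T6 := (h3.const_mul (m_b * b * cos α)).mul
      ((h0.const_mul (cos θ)).add (h1.const_mul (sin θ)))
  have H := (((((T1.add T2).add T3).add T4).add T5).add T6).sub_const (m_b * b * g * cos α)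
  have hEq : fderiv ℝ (LwipVel m_b m_W b g r d I_Wyy I_Wzz I_Bxx I_Byy I_Bz θ α) v w = _ :=
    hcomp.unique H
  rw [hEq]
  have hw0 : (v + (0:ℝ) • w) = v := by simp
  rw [hw0, hvx, hvy]
  ring_nf
  linear_combination (m_b * b * Real.cos α * v 3 * r + (m_b + 2 * m_W) * r ^ 2 * v 4) *
    (sin_sq_add_cos_sq θ)
end

section
/- Suppose the velocities satisfy the rolling constraints ẋ = r cos θ φ̇ and ẏ = r sin θ φ̇. Then the Euclidean inner product in ℝ⁵ of the velocity-gradient ∂L/∂q̇ of the WIP Lagrangian with the vector (−r sin θ · θ̇, r cos θ · θ̇, 0, 0, 0) — the time derivative of the generator (r cos θ, r sin θ, 0, 0, 1) along the motion — equals m_b r b sin α · θ̇². This is the right-hand side of the nonholonomic momentum equation ṗ₁ = m_b r b sin α θ̇². -/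
open Real

/-- On the constraint distribution, pairing the velocity-gradient
of the WIP Lagrangian with (−r sin θ · θ̇, r cos θ · θ̇, 0, 0, 0) — the time
derivative of the generator (r cos θ, r sin θ, 0, 0, 1) along the motion —
yields m_b r b sin α · θ̇², the right-hand side of ṗ₁ = m_b r b sin α θ̇². -/
theorem wip_momentum_equation_rhs_p1
    (m_b m_W b r d g I_Wyy I_Wzz I_Bxx I_Byy I_Bz : ℝ)
    (hmb : 0 < m_b) (hmW : 0 < m_W) (hb : 0 < b) (hr : 0 < r) (hd : 0 < d)
    (hg : 0 < g) (hIWyy : 0 < I_Wyy) (hIWzz : 0 < I_Wzz) (hIBxx : 0 < I_Bxx)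
    (hIByy : 0 < I_Byy) (hIBz : 0 < I_Bz)
    (θ α : ℝ) (v : Fin 5 → ℝ)
    (hvx : v 0 = r * cos θ * v 4) (hvy : v 1 = r * sin θ * v 4) :
    fderiv ℝ (LwipVel m_b m_W b g r d I_Wyy I_Wzz I_Bxx I_Byy I_Bz θ α) v
        ![-(r * sin θ * v 2), r * cos θ * v 2, 0, 0, 0]
      = m_b * r * b * sin α * (v 2) ^ 2 := by
  set L := LwipVel m_b m_W b g r d I_Wyy I_Wzz I_Bxx I_Byy I_Bz θ α with hL
  set w : Fin 5 → ℝ := ![-(r * sin θ * v 2), r * cos θ * v 2, 0, 0, 0] with hw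
  have hw0 : w 0 = -(r * sin θ * v 2) := rfl
  have hw1 : w 1 = r * cos θ * v 2 := rfl
  have hw2 : w 2 = 0 := rfl
  have hw3 : w 3 = 0 := rfl
  have hw4 : w 4 = 0 := rfl
  have hdiff : DifferentiableAt ℝ L v := by
    rw [hL]; unfold LwipVel Itheta; fun_prop
  set A : ℝ := L v with hA
  set B : ℝ :=
    (m_b + 2 * m_W) * (v 0 * (-(r * sin θ * v 2)) + v 1 * (r * cos θ * v 2))
      + m_b * b * sin α * v 2 *
          (-sin θ * (-(r * sin θ * v 2)) + cos θ * (r * cos θ * v 2))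
      + m_b * b * cos α * v 3 *
          (cos θ * (-(r * sin θ * v 2)) + sin θ * (r * cos θ * v 2)) with hB
  set C : ℝ :=
    1 / 2 * (m_b + 2 * m_W) * ((r * sin θ * v 2) ^ 2 + (r * cos θ * v 2) ^ 2) with hC
  have key : (fun t : ℝ => L (v + t • w)) = fun t : ℝ => A + B * t + C * t ^ 2 := by
    funext t
    have e0 : (v + t • w) 0 = v 0 + t * (-(r * sin θ * v 2)) := by
      simp [hw0]
    have e1 : (v + t • w) 1 = v 1 + t * (r * cos θ * v 2) := by
      simp [hw1]
    have e2 : (v + t • w) 2 = v 2 := by simp [hw2]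
    have e3 : (v + t • w) 3 = v 3 := by simp [hw3]
    have e4 : (v + t • w) 4 = v 4 := by simp [hw4]
    rw [hA, hB, hC, hL]
    unfold LwipVel
    rw [e0, e1, e2, e3, e4]
    ring
  have hpoly : HasDerivAt (fun t : ℝ => A + B * t + C * t ^ 2)
      (0 + B * 1 + C * ((2:ℕ) * (0 : ℝ) ^ (2-1))) 0 := by
    exact ((hasDerivAt_const 0 A).add ((hasDerivAt_id (0 : ℝ)).const_mul B)).add
      ((hasDerivAt_pow 2 (0 : ℝ)).const_mul C)
  have hg' : HasLineDerivAt ℝ L B v w := by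
    show HasDerivAt (fun t : ℝ => L (v + t • w)) B 0
    rw [key]
    simpa using hpoly
  have hfd : fderiv ℝ L v w = B := by
    rw [← hdiff.lineDeriv_eq_fderiv, hg'.lineDeriv]
  rw [hfd, hB, hvx, hvy]
  have hpy : sin θ ^ 2 + cos θ ^ 2 = 1 := sin_sq_add_cos_sq θ
  linear_combination (m_b * b * r * v 2 ^ 2 * sin α) * hpy
end

section
/- Suppose the velocities satisfy the rolling constraints ẋ = r cos θ φ̇ and ẏ = r sin θ φ̇. Then the Euclidean inner product in ℝ⁵ of the velocity-gradient ∂L/∂q̇ of the WIP Lagrangian with the vector (ẏ, −ẋ, 0, 0, 0) — the time derivative of the generator (y, −x, 1, 0)_Q along the motion — equals −m_b b r sin α · φ̇ θ̇. This is the right-hand side of the nonholonomic momentum equation ṗ₂ = −m_b b r sin α φ̇ θ̇. -/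
/-!
The Lagrangian is a quadratic form in the velocities minus a potential, so its derivative at `v`
in the direction `w` is the polarization of that form, read off as the linear coefficient of
`t ↦ L (v + t • w)`. For `w = (ẏ, −ẋ, 0, 0, 0)` the translational kinetic term contributes
`ẋẏ − ẏẋ = 0`; under the rolling constraints `cos θ ẏ − sin θ ẋ = 0` kills the `α̇` cross term and
`−sin θ ẏ − cos θ ẋ = −r φ̇` turns the `θ̇` cross term into `−m_b b r sin α φ̇ θ̇`.
-/

open Real

theorem fderiv_apply_eq_of_add_smul_eq_quadratic {𝕜 E F : Type*} [NontriviallyNormedField 𝕜]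
    [NormedAddCommGroup E] [NormedSpace 𝕜 E] [NormedAddCommGroup F] [NormedSpace 𝕜 F]
    {f : E → F} {x w : E} {a b c : F} (hf : DifferentiableAt 𝕜 f x)
    (hline : ∀ t : 𝕜, f (x + t • w) = a + t • b + t ^ 2 • c) :
    fderiv 𝕜 f x w = b := by
  have hquad : HasDerivAt (fun t : 𝕜 => a + t • b + t ^ 2 • c) b 0 := by
    simpa using (((hasDerivAt_id (0 : 𝕜)).smul_const b).const_add a).fun_add
      ((hasDerivAt_pow 2 (0 : 𝕜)).smul_const c)
  rw [← hf.lineDeriv_eq_fderiv, lineDeriv, funext hline, hquad.deriv]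

section WIP

variable (m_b m_W b g r d I_Wyy I_Wzz I_Bxx I_Byy I_Bz θ α : ℝ)

/-- The pairing `⟨∂L/∂q̇ (v), w⟩` of the velocity-gradient of the WIP Lagrangian with `w`. -/
noncomputable def lwipVelPairing (v w : Fin 5 → ℝ) : ℝ :=
  (m_b + 2 * m_W) * (v 0 * w 0 + v 1 * w 1)
    + (Itheta m_b m_W b d I_Wzz I_Bxx I_Bz α + d ^ 2 / (2 * r ^ 2) * I_Wyy) * (v 2 * w 2)
    + (m_b * b ^ 2 + I_Byy) * (v 3 * w 3)
    + 2 * I_Wyy * (v 4 * w 4)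
    + m_b * b * sin α * (w 2 * (-sin θ * v 0 + cos θ * v 1) + v 2 * (-sin θ * w 0 + cos θ * w 1))
    + m_b * b * cos α * (w 3 * (cos θ * v 0 + sin θ * v 1) + v 3 * (cos θ * w 0 + sin θ * w 1))

theorem differentiable_lwipVel :
    Differentiable ℝ (LwipVel m_b m_W b g r d I_Wyy I_Wzz I_Bxx I_Byy I_Bz θ α) := by
  unfold LwipVel
  fun_prop

/-- `L` is a quadratic form minus the potential `m_b b g cos α`, so its quadratic part at `w`
is `L w + m_b b g cos α`. -/
theorem lwipVel_add_smul (v w : Fin 5 → ℝ) (t : ℝ) :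
    LwipVel m_b m_W b g r d I_Wyy I_Wzz I_Bxx I_Byy I_Bz θ α (v + t • w)
      = LwipVel m_b m_W b g r d I_Wyy I_Wzz I_Bxx I_Byy I_Bz θ α v
        + t • lwipVelPairing m_b m_W b r d I_Wyy I_Wzz I_Bxx I_Byy I_Bz θ α v w
        + t ^ 2 • (LwipVel m_b m_W b g r d I_Wyy I_Wzz I_Bxx I_Byy I_Bz θ α w
          + m_b * b * g * cos α) := by
  simp only [LwipVel, lwipVelPairing, Pi.add_apply, Pi.smul_apply, smul_eq_mul]
  ring

theorem fderiv_lwipVel_apply (v w : Fin 5 → ℝ) :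
    fderiv ℝ (LwipVel m_b m_W b g r d I_Wyy I_Wzz I_Bxx I_Byy I_Bz θ α) v w
      = lwipVelPairing m_b m_W b r d I_Wyy I_Wzz I_Bxx I_Byy I_Bz θ α v w :=
  fderiv_apply_eq_of_add_smul_eq_quadratic
    (differentiable_lwipVel m_b m_W b g r d I_Wyy I_Wzz I_Bxx I_Byy I_Bz θ α v)
    (lwipVel_add_smul m_b m_W b g r d I_Wyy I_Wzz I_Bxx I_Byy I_Bz θ α v w)

end WIP

theorem wip_momentum_equation_rhs_p2_general
    (m_b m_W b r d g I_Wyy I_Wzz I_Bxx I_Byy I_Bz : ℝ)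
    (θ α : ℝ) (v : Fin 5 → ℝ)
    (hvx : v 0 = r * cos θ * v 4) (hvy : v 1 = r * sin θ * v 4) :
    fderiv ℝ (LwipVel m_b m_W b g r d I_Wyy I_Wzz I_Bxx I_Byy I_Bz θ α) v
        ![v 1, -(v 0), 0, 0, 0]
      = -(m_b * b * r * sin α * v 4 * v 2) := by
  rw [fderiv_lwipVel_apply]
  simp only [lwipVelPairing, Matrix.cons_val, hvx, hvy]
  linear_combination (-(m_b * b * r * sin α * v 2 * v 4)) * sin_sq_add_cos_sq θ

/-- On the constraint distribution, pairing the velocity-gradient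
of the WIP Lagrangian with (ẏ, −ẋ, 0, 0, 0) — the time derivative of the
generator (y, −x, 1, 0)_Q along the motion — yields −m_b b r sin α · φ̇ θ̇, the
right-hand side of ṗ₂ = −m_b b r sin α φ̇ θ̇. -/
theorem wip_momentum_equation_rhs_p2
    (m_b m_W b r d g I_Wyy I_Wzz I_Bxx I_Byy I_Bz : ℝ)
    (hmb : 0 < m_b) (hmW : 0 < m_W) (hb : 0 < b) (hr : 0 < r) (hd : 0 < d)
    (hg : 0 < g) (hIWyy : 0 < I_Wyy) (hIWzz : 0 < I_Wzz) (hIBxx : 0 < I_Bxx)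
    (hIByy : 0 < I_Byy) (hIBz : 0 < I_Bz)
    (θ α : ℝ) (v : Fin 5 → ℝ)
    (hvx : v 0 = r * cos θ * v 4) (hvy : v 1 = r * sin θ * v 4) :
    fderiv ℝ (LwipVel m_b m_W b g r d I_Wyy I_Wzz I_Bxx I_Byy I_Bz θ α) v
        ![v 1, -(v 0), 0, 0, 0]
      = -(m_b * b * r * sin α * v 4 * v 2) :=
  wip_momentum_equation_rhs_p2_general m_b m_W b r d g I_Wyy I_Wzz I_Bxx I_Byy I_Bz θ α v hvx hvy
end

section
/- (Constrained reduced Lagrangian.) Suppose the velocities satisfy the rolling constraints ẋ = r cos θ φ̇ and ẏ = r sin θ φ̇ (equivalently, in body coordinates, ξ₁ = cos θ ẋ + sin θ ẏ = r φ̇ and ξ₂ = −sin θ ẋ + cos θ ẏ = 0 with ξ₄ = φ̇). Then the WIP Lagrangian L equals the constrained reduced Lagrangian l_c(α, α̇, θ̇, φ̇) = ½ [(m_b + 2m_W) r² + 2 I_Wyy] φ̇² + r m_b b cos α · α̇ φ̇ + ½ f(α) θ̇² + ½ (m_b b² + I_Byy) α̇² − m_b g b cos α. -/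
open Real

/-- On the rolling constraints ẋ = r cos θ φ̇, ẏ = r sin θ φ̇
(i.e. ξ₁ = r φ̇, ξ₂ = 0 in body coordinates), the WIP Lagrangian equals the
constrained reduced Lagrangian l_c(α, α̇, θ̇, φ̇). -/
theorem wip_constrained_reduced_lagrangian
    (m_b m_W b r d g I_Wyy I_Wzz I_Bxx I_Byy I_Bz : ℝ)
    (hmb : 0 < m_b) (hmW : 0 < m_W) (hb : 0 < b) (hr : 0 < r) (hd : 0 < d)
    (hg : 0 < g) (hIWyy : 0 < I_Wyy) (hIWzz : 0 < I_Wzz) (hIBxx : 0 < I_Bxx)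
    (hIByy : 0 < I_Byy) (hIBz : 0 < I_Bz)
    (θ α xdot ydot θdot αdot φdot : ℝ)
    (hx : xdot = r * cos θ * φdot) (hy : ydot = r * sin θ * φdot) :
    Lwip5 m_b m_W b g r d I_Wyy I_Wzz I_Bxx I_Byy I_Bz θ α xdot ydot θdot αdot φdot
      = 1 / 2 * ((m_b + 2 * m_W) * r ^ 2 + 2 * I_Wyy) * φdot ^ 2
        + r * m_b * b * cos α * αdot * φdot
        + 1 / 2 * (Itheta m_b m_W b d I_Wzz I_Bxx I_Bz α + d ^ 2 / (2 * r ^ 2) * I_Wyy)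
            * θdot ^ 2
        + 1 / 2 * (m_b * b ^ 2 + I_Byy) * αdot ^ 2
        - m_b * g * b * cos α := by
  subst hx hy
  simp only [Lwip5]
  linear_combination (m_b * r * b * αdot * cos α * φdot
    + (m_b / 2 + m_W) * r ^ 2 * φdot ^ 2) * sin_sq_add_cos_sq θ
end

section
/- (Shape dynamics of the WIP.) Let θ, α, φ : ℝ → ℝ be twice differentiable and set p₂ = f(α) θ̇ and p₁ = h φ̇ + m_b b r cos α α̇. Assume: (i) the momentum equation ṗ₁ = m_b r b sin α · θ̇² holds; and (ii) the tilt Euler–Lagrange equation holds: d/dt[(m_b b² + I_Byy) α̇ + r m_b b cos α · φ̇] = −r m_b b sin α · α̇ φ̇ + ½ f′(α) θ̇² + m_b g b sin α, where f′(α) = (I_Bxx + m_b b² − I_Bz) sin 2α is the derivative of f. Then the tilt angle satisfies the reduced shape dynamics (m_b b² + I_Byy − m_b² b² r² cos²α / h) α̈ = −(m_b² b² r² sin 2α / (2h)) α̇² + ((h f′(α) − m_b² b² r² sin 2α) / (2 h f(α)²)) p₂² + m_b g b sin α. -/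
/-! Both hypotheses become linear in φ̈ once their time derivatives are expanded by the product
rule. Eliminating φ̈ (h times the tilt equation minus m_b b r cos α times the momentum equation)
leaves an equation in α alone; dividing by h and writing θ̇ = p₂ / f gives the shape dynamics. -/

open Real

/-- f(α) = I_θ(α) + (d²/(2r²)) I_Wyy. -/
noncomputable def fWip (m_b m_W b r d I_Wyy I_Wzz I_Bxx I_Bz : ℝ) (α : ℝ) : ℝ :=
  Itheta m_b m_W b d I_Wzz I_Bxx I_Bz α + d ^ 2 / (2 * r ^ 2) * I_Wyy

/-- f′(α) = (I_Bxx + m_b b² − I_Bz) sin 2α, the derivative of f. -/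
noncomputable def fWip' (m_b b I_Bxx I_Bz : ℝ) (α : ℝ) : ℝ :=
  (I_Bxx + m_b * b ^ 2 - I_Bz) * sin (2 * α)

theorem deriv_const_mul_add_cos_mul {a u v : ℝ → ℝ} {t : ℝ} (A B : ℝ)
    (ha : DifferentiableAt ℝ a t) (hu : DifferentiableAt ℝ u t) (hv : DifferentiableAt ℝ v t) :
    deriv (fun s => A * u s + B * cos (a s) * v s) t
      = A * deriv u t + B * (-sin (a t) * deriv a t * v t + cos (a t) * deriv v t) :=
  ((hu.hasDerivAt.const_mul A).add ((ha.hasDerivAt.cos.const_mul B).mul hv.hasDerivAt)).deriv.trans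
    (by ring)

theorem fWip_pos {m_b m_W b r d I_Wyy I_Wzz I_Bxx I_Bz : ℝ} (hmb : 0 ≤ m_b) (hmW : 0 ≤ m_W)
    (hIWzz : 0 < I_Wzz) (hIBxx : 0 ≤ I_Bxx) (hIBz : 0 ≤ I_Bz) (hIWyy : 0 ≤ I_Wyy) (α : ℝ) :
    0 < fWip m_b m_W b r d I_Wyy I_Wzz I_Bxx I_Bz α := by
  unfold fWip Itheta
  positivity

theorem shape_dynamics_of_momentum_and_tilt {h M k c s α₁ α₂ φ₁ φ₂ θ₁ f f' G : ℝ}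
    (hh : h ≠ 0) (hf : f ≠ 0)
    (hmom : h * φ₂ + k * (-s * α₁ * α₁ + c * α₂) = k * s * θ₁ ^ 2)
    (htilt : M * α₂ + k * (-s * α₁ * φ₁ + c * φ₂) = -(k * s) * α₁ * φ₁ + 1 / 2 * f' * θ₁ ^ 2 + G) :
    (M - k ^ 2 * c ^ 2 / h) * α₂
      = -(k ^ 2 * (2 * s * c) / (2 * h)) * α₁ ^ 2
        + (h * f' - k ^ 2 * (2 * s * c)) / (2 * h * f ^ 2) * (f * θ₁) ^ 2 + G := by
  have hshape : (h * M - k ^ 2 * c ^ 2) * α₂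
      = -(k ^ 2 * s * c) * α₁ ^ 2 + (h * f' / 2 - k ^ 2 * s * c) * θ₁ ^ 2 + h * G := by
    linear_combination h * htilt - k * c * hmom
  field_simp
  linear_combination 2 * hshape

theorem wip_shape_dynamics_general
    (m_b m_W b r d g I_Wyy I_Wzz I_Bxx I_Byy I_Bz : ℝ)
    (hmb : 0 < m_b) (hmW : 0 < m_W)
    (hIWyy : 0 < I_Wyy) (hIWzz : 0 < I_Wzz) (hIBxx : 0 < I_Bxx)
    (hIBz : 0 < I_Bz)
    (θ α φ : ℝ → ℝ)
    (hα : Differentiable ℝ α) (hα' : Differentiable ℝ (deriv α))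
    (hφ' : Differentiable ℝ (deriv φ))
    -- (i) the momentum equation ṗ₁ = m_b r b sin α · θ̇²
    (hmom : ∀ t,
      deriv (fun s => ((m_b + 2 * m_W) * r ^ 2 + 2 * I_Wyy) * deriv φ s
          + m_b * b * r * cos (α s) * deriv α s) t
        = m_b * r * b * sin (α t) * (deriv θ t) ^ 2)
    -- (ii) the tilt Euler–Lagrange equation
    (hEL : ∀ t,
      deriv (fun s => (m_b * b ^ 2 + I_Byy) * deriv α s
          + r * m_b * b * cos (α s) * deriv φ s) t
        = -(r * m_b * b * sin (α t)) * deriv α t * deriv φ t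
          + 1 / 2 * fWip' m_b b I_Bxx I_Bz (α t) * (deriv θ t) ^ 2
          + m_b * g * b * sin (α t)) :
    ∀ t,
      (m_b * b ^ 2 + I_Byy
          - m_b ^ 2 * b ^ 2 * r ^ 2 * (cos (α t)) ^ 2
              / ((m_b + 2 * m_W) * r ^ 2 + 2 * I_Wyy))
          * deriv (deriv α) t
        = -(m_b ^ 2 * b ^ 2 * r ^ 2 * sin (2 * α t)
              / (2 * ((m_b + 2 * m_W) * r ^ 2 + 2 * I_Wyy))) * (deriv α t) ^ 2
          + (((m_b + 2 * m_W) * r ^ 2 + 2 * I_Wyy) * fWip' m_b b I_Bxx I_Bz (α t)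
                - m_b ^ 2 * b ^ 2 * r ^ 2 * sin (2 * α t))
              / (2 * ((m_b + 2 * m_W) * r ^ 2 + 2 * I_Wyy)
                  * (fWip m_b m_W b r d I_Wyy I_Wzz I_Bxx I_Bz (α t)) ^ 2)
              * (fWip m_b m_W b r d I_Wyy I_Wzz I_Bxx I_Bz (α t) * deriv θ t) ^ 2
          + m_b * g * b * sin (α t) := by
  intro t
  have hh : (m_b + 2 * m_W) * r ^ 2 + 2 * I_Wyy ≠ 0 := by positivity
  have hf : fWip m_b m_W b r d I_Wyy I_Wzz I_Bxx I_Bz (α t) ≠ 0 :=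
    (fWip_pos hmb.le hmW.le hIWzz hIBxx.le hIBz.le hIWyy.le (α t)).ne'
  have hmom' := (deriv_const_mul_add_cos_mul _ _ (hα t) (hφ' t) (hα' t)).symm.trans (hmom t)
  have hEL' := (deriv_const_mul_add_cos_mul _ _ (hα t) (hα' t) (hφ' t)).symm.trans (hEL t)
  rw [sin_two_mul, show m_b ^ 2 * b ^ 2 * r ^ 2 = (m_b * b * r) ^ 2 by ring]
  exact shape_dynamics_of_momentum_and_tilt (φ₁ := deriv φ t) (φ₂ := deriv (deriv φ) t) hh hf
    (by linear_combination hmom') (by linear_combination hEL')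

/-- Shape dynamics of the WIP. Given the forward momentum equation
and the tilt Euler–Lagrange equation, the tilt angle α satisfies the reduced
shape dynamics. -/
theorem wip_shape_dynamics
    (m_b m_W b r d g I_Wyy I_Wzz I_Bxx I_Byy I_Bz : ℝ)
    (hmb : 0 < m_b) (hmW : 0 < m_W) (hb : 0 < b) (hr : 0 < r) (hd : 0 < d)
    (hg : 0 < g) (hIWyy : 0 < I_Wyy) (hIWzz : 0 < I_Wzz) (hIBxx : 0 < I_Bxx)
    (hIByy : 0 < I_Byy) (hIBz : 0 < I_Bz)
    (θ α φ : ℝ → ℝ)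
    (hθ : Differentiable ℝ θ) (hθ' : Differentiable ℝ (deriv θ))
    (hα : Differentiable ℝ α) (hα' : Differentiable ℝ (deriv α))
    (hφ : Differentiable ℝ φ) (hφ' : Differentiable ℝ (deriv φ))
    -- (i) the momentum equation ṗ₁ = m_b r b sin α · θ̇²
    (hmom : ∀ t,
      deriv (fun s => ((m_b + 2 * m_W) * r ^ 2 + 2 * I_Wyy) * deriv φ s
          + m_b * b * r * cos (α s) * deriv α s) t
        = m_b * r * b * sin (α t) * (deriv θ t) ^ 2)
    -- (ii) the tilt Euler–Lagrange equation
    (hEL : ∀ t,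
      deriv (fun s => (m_b * b ^ 2 + I_Byy) * deriv α s
          + r * m_b * b * cos (α s) * deriv φ s) t
        = -(r * m_b * b * sin (α t)) * deriv α t * deriv φ t
          + 1 / 2 * fWip' m_b b I_Bxx I_Bz (α t) * (deriv θ t) ^ 2
          + m_b * g * b * sin (α t)) :
    ∀ t,
      (m_b * b ^ 2 + I_Byy
          - m_b ^ 2 * b ^ 2 * r ^ 2 * (cos (α t)) ^ 2
              / ((m_b + 2 * m_W) * r ^ 2 + 2 * I_Wyy))
          * deriv (deriv α) t
        = -(m_b ^ 2 * b ^ 2 * r ^ 2 * sin (2 * α t)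
              / (2 * ((m_b + 2 * m_W) * r ^ 2 + 2 * I_Wyy))) * (deriv α t) ^ 2
          + (((m_b + 2 * m_W) * r ^ 2 + 2 * I_Wyy) * fWip' m_b b I_Bxx I_Bz (α t)
                - m_b ^ 2 * b ^ 2 * r ^ 2 * sin (2 * α t))
              / (2 * ((m_b + 2 * m_W) * r ^ 2 + 2 * I_Wyy)
                  * (fWip m_b m_W b r d I_Wyy I_Wzz I_Bxx I_Bz (α t)) ^ 2)
              * (fWip m_b m_W b r d I_Wyy I_Wzz I_Bxx I_Bz (α t) * deriv θ t) ^ 2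
          + m_b * g * b * sin (α t) :=
  wip_shape_dynamics_general m_b m_W b r d g I_Wyy I_Wzz I_Bxx I_Byy I_Bz hmb hmW hIWyy hIWzz hIBxx
    hIBz θ α φ hα hα' hφ' hmom hEL
end
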